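/- Let f ≥ 1, ε_small > 0, and ε_cell ∈ (0,1] with 1/ε_cell ∈ ℕ, and consider the grid cells, i.e., the closed squares [ℓ·ε_cell, (ℓ+1)·ε_cell] × [ℓ'·ε_cell, (ℓ'+1)·ε_cell] for ℓ,ℓ' ∈ {0,…,1/ε_cell − 1}. Let P₁,…,Pₙ be pairwise disjoint convex subsets of [0,1]², each of diameter at most 2·f·ε_small. Then the total area of those Pᵢ that are not contained in a single grid cell is at most 8·f·ε_small/ε_cell. -/

import Mathlib

open Metric Set MeasureTheory
open scoped Classical

noncomputable section

/-- The plane ℝ² with the Euclidean metric. -/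
abbrev Plane := EuclideanSpace ℝ (Fin 2)

/-- The unit square `[0,1] × [0,1]` in the plane. -/
def unitSquare : Set Plane := {x | x 0 ∈ Icc (0:ℝ) 1 ∧ x 1 ∈ Icc (0:ℝ) 1}

/-- The grid cell `[ℓ·εc,(ℓ+1)·εc] × [ℓ'·εc,(ℓ'+1)·εc]`. -/
def gridCell (εc : ℝ) (ℓ ℓ' : ℕ) : Set Plane :=
  {x | x 0 ∈ Icc ((ℓ : ℝ) * εc) (((ℓ : ℝ) + 1) * εc) ∧
       x 1 ∈ Icc ((ℓ' : ℝ) * εc) (((ℓ' : ℝ) + 1) * εc)}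

/-- coordinate distance bound -/
lemma coord_dist_le (w z : Plane) (c : Fin 2) : |w c - z c| ≤ dist w z := by
  rw [EuclideanSpace.dist_eq]
  have h1 : |w c - z c| = Real.sqrt (dist (w c) (z c) ^ 2) := by
    rw [Real.sqrt_sq_eq_abs, Real.dist_eq, abs_abs]
  rw [h1]
  apply Real.sqrt_le_sqrt
  exact Finset.single_le_sum (f := fun i => dist (w i) (z i) ^ 2)
    (fun i _ => sq_nonneg _) (Finset.mem_univ c)

/-- volume of an axis-aligned box in the plane -/
lemma volume_box (a b c d : ℝ) :
    volume {x : Plane | x 0 ∈ Icc a b ∧ x 1 ∈ Icc c d}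
      = ENNReal.ofReal (b - a) * ENNReal.ofReal (d - c) := by
  have hset : {x : Plane | x 0 ∈ Icc a b ∧ x 1 ∈ Icc c d}
      = ((MeasurableEquiv.toLp 2 (Fin 2 → ℝ)).symm) ⁻¹'
        (Set.univ.pi fun i : Fin 2 => if i = 0 then Icc a b else Icc c d) := by
    ext x
    simp only [mem_setOf_eq, mem_preimage, Set.mem_pi, Set.mem_univ, forall_true_left,
      Fin.forall_fin_two]
    simp
  rw [hset, (EuclideanSpace.volume_preserving_symm_measurableEquiv_toLp (Fin 2)).measure_preimage
    ((MeasurableSet.univ_pi (fun i => by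
      split <;> exact measurableSet_Icc)).nullMeasurableSet)]
  rw [volume_pi_pi]
  rw [Fin.prod_univ_two]
  simp [Real.volume_Icc]

lemma unitSquare_isBounded : Bornology.IsBounded unitSquare := by
  rw [Metric.isBounded_iff]
  refine ⟨2, fun x hx y hy => ?_⟩
  rw [EuclideanSpace.dist_eq]
  have h2 : Real.sqrt (∑ i : Fin 2, dist (x i) (y i) ^ 2) ≤ Real.sqrt 2 := by
    apply Real.sqrt_le_sqrt
    rw [Fin.sum_univ_two]
    have hx0 := hx.1; have hx1 := hx.2; have hy0 := hy.1; have hy1 := hy.2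
    have e0 : dist (x 0) (y 0) ≤ 1 := by
      rw [Real.dist_eq, abs_le]
      constructor <;> [linarith [hx0.1, hx0.2, hy0.1, hy0.2]; linarith [hx0.1, hx0.2, hy0.1, hy0.2]]
    have e1 : dist (x 1) (y 1) ≤ 1 := by
      rw [Real.dist_eq, abs_le]
      constructor <;> [linarith [hx1.1, hx1.2, hy1.1, hy1.2]; linarith [hx1.1, hx1.2, hy1.1, hy1.2]]
    have := sq_nonneg (dist (x 0) (y 0))
    nlinarith [dist_nonneg (x := x 0) (y := y 0), dist_nonneg (x := x 1) (y := y 1)]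
  calc Real.sqrt (∑ i : Fin 2, dist (x i) (y i) ^ 2) ≤ Real.sqrt 2 := h2
    _ ≤ 2 := by
        nlinarith [Real.sq_sqrt (by norm_num : (0:ℝ) ≤ 2), Real.sqrt_nonneg 2]

/-- a point of the unit square lies in some grid cell -/
lemma point_in_cell (εc : ℝ) (hεc0 : 0 < εc) (M : ℕ) (hMεc : (M : ℝ) * εc = 1)
    (hM1 : 1 ≤ M) (t : ℝ) (ht : t ∈ Icc (0:ℝ) 1) :
    ∃ ℓ : ℕ, ℓ < M ∧ t ∈ Icc ((ℓ : ℝ) * εc) (((ℓ : ℝ) + 1) * εc) := by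
  refine ⟨min ⌊t / εc⌋₊ (M - 1), ?_, ?_, ?_⟩
  · calc min ⌊t / εc⌋₊ (M - 1) ≤ M - 1 := min_le_right _ _
      _ < M := Nat.sub_lt (by omega) one_pos
  · have h1 : ((min ⌊t / εc⌋₊ (M - 1) : ℕ) : ℝ) ≤ t / εc := by
      calc ((min ⌊t / εc⌋₊ (M - 1) : ℕ) : ℝ) ≤ (⌊t / εc⌋₊ : ℝ) := by
            exact_mod_cast Nat.cast_le.mpr (min_le_left _ _)
        _ ≤ t / εc := Nat.floor_le (div_nonneg ht.1 hεc0.le)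
    calc ((min ⌊t / εc⌋₊ (M - 1) : ℕ) : ℝ) * εc ≤ (t / εc) * εc :=
          mul_le_mul_of_nonneg_right h1 hεc0.le
      _ = t := div_mul_cancel₀ t hεc0.ne'
  · rcases le_or_gt (⌊t / εc⌋₊) (M - 1) with h | h
    · rw [min_eq_left h]
      have h2 : t / εc < (⌊t / εc⌋₊ : ℝ) + 1 := Nat.lt_floor_add_one _
      have := mul_lt_mul_of_pos_right h2 hεc0
      rw [div_mul_cancel₀ t hεc0.ne'] at this
      exact this.le
    · rw [min_eq_right h.le]
      have hcast : (((M - 1 : ℕ) : ℝ) + 1) = (M : ℝ) := by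
        have : ((M - 1 : ℕ) : ℝ) = (M : ℝ) - 1 := by
          rw [Nat.cast_sub hM1]; simp
        rw [this]; ring
      rw [hcast, hMεc]
      exact ht.2

/-- a convex subset of the unit square not contained in a grid cell lies in a strip -/
lemma cut_subset_strip (f εs εc : ℝ) (hεc0 : 0 < εc)
    (M : ℕ) (hMεc : (M : ℝ) * εc = 1) (hM1 : 1 ≤ M)
    (Q : Set Plane) (hconv : Convex ℝ Q) (hsub : Q ⊆ unitSquare)
    (hdiam : Metric.diam Q ≤ 2 * f * εs)
    (hcut : ¬ ∃ ℓ ℓ' : ℕ, ℓ < M ∧ ℓ' < M ∧ Q ⊆ gridCell εc ℓ ℓ') :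
    ∃ c : Fin 2, ∃ k : ℕ, 1 ≤ k ∧ k < M ∧ ∀ w ∈ Q, |w c - (k : ℝ) * εc| ≤ 2 * f * εs := by
  -- Q is nonempty
  rcases Q.eq_empty_or_nonempty with hQ | ⟨x, hx⟩
  · exact absurd ⟨0, 0, by omega, by omega, by rw [hQ]; exact empty_subset _⟩ hcut
  obtain ⟨hx0, hx1⟩ := hsub hx
  obtain ⟨ℓ0, hℓ0M, hxc0⟩ := point_in_cell εc hεc0 M hMεc hM1 _ hx0
  obtain ⟨ℓ1, hℓ1M, hxc1⟩ := point_in_cell εc hεc0 M hMεc hM1 _ hx1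
  have hnot : ¬ Q ⊆ gridCell εc ℓ0 ℓ1 := fun h => hcut ⟨ℓ0, ℓ1, hℓ0M, hℓ1M, h⟩
  obtain ⟨y, hy, hynot⟩ := not_subset.mp hnot
  obtain ⟨hy0, hy1⟩ := hsub hy
  -- pick the coordinate where y escapes the cell
  have key : ∃ c : Fin 2, ∃ ℓ : ℕ, ℓ < M ∧
      x c ∈ Icc ((ℓ : ℝ) * εc) (((ℓ : ℝ) + 1) * εc) ∧
      y c ∉ Icc ((ℓ : ℝ) * εc) (((ℓ : ℝ) + 1) * εc) := by
    by_contra hcon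
    push_neg at hcon
    exact hynot ⟨hcon 0 ℓ0 hℓ0M hxc0, hcon 1 ℓ1 hℓ1M hxc1⟩
  obtain ⟨c, ℓ, hℓM, hxc, hyc⟩ := key
  have hyc01 : y c ∈ Icc (0:ℝ) 1 := by fin_cases c
                                       · exact hy0
                                       · exact hy1
  have hxcQ := hx
  -- determine the crossing line index k and crossing value v between x c and y c
  have hcase : (1 ≤ ℓ ∧ ℓ < M ∧ (ℓ : ℝ) * εc ∈ Icc (min (x c) (y c)) (max (x c) (y c))) ∨
      (1 ≤ ℓ + 1 ∧ ℓ + 1 < M ∧ ((ℓ : ℝ) + 1) * εc ∈ Icc (min (x c) (y c)) (max (x c) (y c))) := by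
    rw [mem_Icc, not_and_or, not_le, not_le] at hyc
    rcases hyc with h | h
    · left
      have hℓ1 : 1 ≤ ℓ := by
        by_contra hl
        have : ℓ = 0 := by omega
        rw [this] at h
        simp at h
        linarith [hyc01.1]
      exact ⟨hℓ1, hℓM, (min_le_right _ _).trans h.le, le_max_of_le_left hxc.1⟩
    · right
      have hlt : ((ℓ : ℝ) + 1) * εc < (M : ℝ) * εc := by
        calc ((ℓ : ℝ) + 1) * εc < y c := h
          _ ≤ 1 := hyc01.2
          _ = (M : ℝ) * εc := hMεc.symm
      have hℓ1M : ℓ + 1 < M := by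
        have h2 := lt_of_mul_lt_mul_right hlt hεc0.le
        have h3 : ((ℓ + 1 : ℕ) : ℝ) < (M : ℝ) := by push_cast; linarith
        exact_mod_cast h3
      exact ⟨by omega, hℓ1M, (min_le_left _ _).trans hxc.2, le_max_of_le_right h.le⟩
  -- unify the two cases
  obtain ⟨k, hk1, hkM, hv⟩ : ∃ k : ℕ, 1 ≤ k ∧ k < M ∧
      (k : ℝ) * εc ∈ Icc (min (x c) (y c)) (max (x c) (y c)) := by
    rcases hcase with ⟨h1, h2, h3⟩ | ⟨h1, h2, h3⟩
    · exact ⟨ℓ, h1, h2, h3⟩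
    · exact ⟨ℓ + 1, h1, h2, by push_cast; exact_mod_cast h3⟩
  -- intermediate value: find z ∈ Q with z c = k * εc
  set v : ℝ := (k : ℝ) * εc with hvdef
  have hivt : ∃ z ∈ Q, z c = v := by
    set g : ℝ → ℝ := fun t => (1 - t) * x c + t * y c with hg
    have hgc : ContinuousOn g (uIcc (0:ℝ) 1) := (by fun_prop : Continuous g).continuousOn
    have hsurj := intermediate_value_uIcc hgc
    have hg0 : g 0 = x c := by simp [hg]
    have hg1 : g 1 = y c := by simp [hg]
    have hvmem : v ∈ uIcc (g 0) (g 1) := by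
      rw [hg0, hg1]
      simpa [Set.uIcc] using hv
    obtain ⟨t, ht, hgt⟩ := hsurj hvmem
    rw [uIcc_of_le (zero_le_one)] at ht
    refine ⟨(1 - t) • x + t • y, hconv hx hy (by linarith [ht.1, ht.2]) ht.1 (by ring), ?_⟩
    show ((1 - t) • x + t • y) c = v
    simp only [PiLp.add_apply, PiLp.smul_apply, smul_eq_mul]
    exact hgt
  obtain ⟨z, hz, hzc⟩ := hivt
  refine ⟨c, k, hk1, hkM, fun w hw => ?_⟩
  have hb : Bornology.IsBounded Q := unitSquare_isBounded.subset hsub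
  calc |w c - (k : ℝ) * εc| = |w c - z c| := by rw [hzc]
    _ ≤ dist w z := coord_dist_le w z c
    _ ≤ Metric.diam Q := dist_le_diam_of_mem hb hw hz
    _ ≤ 2 * f * εs := hdiam

/-- Bound on the total area of small polygons cut by the grid (Lemma 4.5): for pairwise
disjoint convex subsets of the unit square, each of diameter at most `2·f·ε_small`, the
total area of those not contained in a single grid cell of the `ε_cell`-grid is at most
`8·f·ε_small/ε_cell`. -/
theorem area_of_cut_small_convex_sets
    (f : ℝ) (hf : 1 ≤ f) (εs εc : ℝ) (hεs : 0 < εs) (hεc0 : 0 < εc) (hεc1 : εc ≤ 1)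
    (M : ℕ) (hM : (M : ℝ) = 1 / εc)
    (n : ℕ) (P : Fin n → Set Plane)
    (hconv : ∀ i, Convex ℝ (P i))
    (hdisj : ∀ i j, i ≠ j → Disjoint (P i) (P j))
    (hsub : ∀ i, P i ⊆ unitSquare)
    (hdiam : ∀ i, Metric.diam (P i) ≤ 2 * f * εs) :
    ∑ i ∈ Finset.univ.filter (fun i : Fin n =>
        ¬ ∃ ℓ ℓ' : ℕ, ℓ < M ∧ ℓ' < M ∧ P i ⊆ gridCell εc ℓ ℓ'),
      volume (P i) ≤ ENNReal.ofReal (8 * f * εs / εc) := by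
  have hMεc : (M : ℝ) * εc = 1 := by rw [hM]; field_simp
  have hM1 : 1 ≤ M := by
    by_contra h
    have : M = 0 := by omega
    rw [this] at hMεc; simp at hMεc
  set D := 2 * f * εs with hD
  have hD0 : 0 ≤ D := by positivity
  -- the strips
  set Sv : ℕ → Set Plane := fun k =>
    {x | x 0 ∈ Icc ((k : ℝ) * εc - D) ((k : ℝ) * εc + D) ∧ x 1 ∈ Icc (0:ℝ) 1} with hSv
  set Sh : ℕ → Set Plane := fun k =>
    {x | x 0 ∈ Icc (0:ℝ) 1 ∧ x 1 ∈ Icc ((k : ℝ) * εc - D) ((k : ℝ) * εc + D)} with hSh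
  set S : Set Plane := (⋃ k ∈ Finset.Ico 1 M, Sv k) ∪ (⋃ k ∈ Finset.Ico 1 M, Sh k) with hS
  set T := Finset.univ.filter (fun i : Fin n =>
        ¬ ∃ ℓ ℓ' : ℕ, ℓ < M ∧ ℓ' < M ∧ P i ⊆ gridCell εc ℓ ℓ') with hT
  -- all cut sets lie in S
  have hPS : ∀ i ∈ T, P i ⊆ S := by
    intro i hi
    rw [hT, Finset.mem_filter] at hi
    obtain ⟨c, k, hk1, hkM, hstrip⟩ :=
      cut_subset_strip f εs εc hεc0 M hMεc hM1 (P i) (hconv i) (hsub i) (hdiam i) hi.2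
    intro w hw
    have hw01 := hsub i hw
    have habs := hstrip w hw
    rw [abs_le] at habs
    have hc : c = 0 ∨ c = 1 := by fin_cases c <;> simp
    rcases hc with rfl | rfl
    · exact Or.inl (Set.mem_biUnion (Finset.mem_Ico.mpr ⟨hk1, hkM⟩)
        ⟨⟨by linarith [habs.1], by linarith [habs.2]⟩, hw01.2⟩)
    · exact Or.inr (Set.mem_biUnion (Finset.mem_Ico.mpr ⟨hk1, hkM⟩)
        ⟨hw01.1, ⟨by linarith [habs.1], by linarith [habs.2]⟩⟩)
  -- sum of volumes = volume of union
  have hsum : ∑ i ∈ T, volume (P i) = volume (⋃ i ∈ T, P i) := by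
    rw [measure_biUnion_finset₀]
    · intro i _ j _ hij
      exact (hdisj i j hij).aedisjoint
    · intro i _
      have h := (hconv i).nullMeasurableSet
        (μ := (EuclideanSpace.basisFun (Fin 2) ℝ).toBasis.addHaar)
      rwa [(EuclideanSpace.basisFun (Fin 2) ℝ).addHaar_eq_volume] at h
  rw [hsum]
  have hUS : (⋃ i ∈ T, P i) ⊆ S := Set.iUnion₂_subset hPS
  have hvolSv : ∀ k : ℕ, volume (Sv k) = ENNReal.ofReal (2 * D) := by
    intro k
    rw [hSv]
    have := volume_box ((k : ℝ) * εc - D) ((k : ℝ) * εc + D) 0 1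
    rw [this]
    norm_num
    congr 1
    ring_nf
    rw [ENNReal.ofReal_mul hD0]; simp
  have hvolSh : ∀ k : ℕ, volume (Sh k) = ENNReal.ofReal (2 * D) := by
    intro k
    rw [hSh]
    have := volume_box 0 1 ((k : ℝ) * εc - D) ((k : ℝ) * εc + D)
    rw [this]
    norm_num
    congr 1
    ring_nf
    rw [ENNReal.ofReal_mul hD0]; simp
  have hcard : (Finset.Ico 1 M).card = M - 1 := by rw [Nat.card_Ico]
  have hvolS : volume S ≤ ENNReal.ofReal (8 * f * εs / εc) := by
    calc volume S ≤ volume (⋃ k ∈ Finset.Ico 1 M, Sv k) + volume (⋃ k ∈ Finset.Ico 1 M, Sh k) :=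
          measure_union_le _ _
      _ ≤ (∑ k ∈ Finset.Ico 1 M, volume (Sv k)) + ∑ k ∈ Finset.Ico 1 M, volume (Sh k) :=
          add_le_add (measure_biUnion_finset_le _ _) (measure_biUnion_finset_le _ _)
      _ = ((M - 1 : ℕ) : ENNReal) * ENNReal.ofReal (2 * D) +
          ((M - 1 : ℕ) : ENNReal) * ENNReal.ofReal (2 * D) := by
          rw [Finset.sum_congr rfl (fun k _ => hvolSv k),
            Finset.sum_congr rfl (fun k _ => hvolSh k)]
          simp [hcard, mul_comm]
      _ ≤ ((M : ℕ) : ENNReal) * ENNReal.ofReal (2 * D) +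
          ((M : ℕ) : ENNReal) * ENNReal.ofReal (2 * D) := by
          gcongr <;> exact_mod_cast Nat.sub_le M 1
      _ = ENNReal.ofReal ((M : ℝ)) * ENNReal.ofReal (2 * D) +
          ENNReal.ofReal ((M : ℝ)) * ENNReal.ofReal (2 * D) := by
          rw [ENNReal.ofReal_natCast]
      _ = ENNReal.ofReal ((M : ℝ) * (2 * D) + (M : ℝ) * (2 * D)) := by
          rw [← ENNReal.ofReal_mul (by positivity), ← ENNReal.ofReal_add (by positivity) (by positivity)]
      _ = ENNReal.ofReal (8 * f * εs / εc) := by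
          congr 1
          rw [hD, hM]
          field_simp
          ring
  exact (measure_mono hUS).trans hvolS
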